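/- Let C' be a linear [n',k']_q code of effective length n', all of whose nonzero codewords have Hamming weight in W ⊆ ℕ_{≥1}, with generator matrix G', and let r be its minimum column multiplicity. Then there exists a point P* spanned by a column of G' with multiplicity exactly r such that: (i) the weight enumerator w_{C_{P*}}(x) is lexicographically minimal among the weight enumerators w_{C_P}(x) over all points P spanned by columns of G' of multiplicity r, where C_P denotes the [n'−r, k'−1]_q code obtained from C' by deleting the r columns spanning P and the corresponding row (after transforming a column spanning P into a unit vector); and (ii) C' is equivalent to the code generated by the block matrix [[Ĝ, 0],[a, 1⋯1]] with Ĝ a generator matrix of C_{P*}, a ∈ F_q^{n'−r}, and r columns in the last block. -/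

import Mathlib

/-!
Fix a column of `G'` of multiplicity `r`, spanning the point `P = ⟨g⟩`. A change of basis of
`F^{k'}` sending `g` to the last unit vector, followed by moving the `r` columns that span `P`
to the end and rescaling them to `g`, turns `G'` into `[[Ĝ, 0], [a, 1⋯1]]`, a generator matrix of
a code equivalent to `C'`. Its `k'` rows are independent, hence so are the `k' - 1` rows of `Ĝ`;
padding codewords of `Ĝ` with zeros gives codewords of that code, so their weights lie in `W`; a
zero column of `Ĝ` would come from a column of `G'` that is a multiple of `g` yet does not span
`P`, which is impossible since no column of `G'` vanishes. Such residual codes form a finite nonempty set and the lexicographic order on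
`ℕ → ℕ` is linear, so one of them has a minimal weight enumerator.
-/

open Matrix

variable {F : Type*} [Field F]

/-- The row space of a matrix. -/
def rowSpan {k n : Type*} (G : Matrix k n F) : Submodule F (n → F) :=
  Submodule.span F (Set.range fun i => G i)

/-- The multiplicity of the column `j0` of `G`: the number of columns of `G` whose span
equals the span of column `j0`. -/
noncomputable def colMult {m n : Type*} [Fintype n] (G : Matrix m n F) (j0 : n) : ℕ :=
  Nat.card {j : n // Submodule.span F {fun i => G i j} =
    Submodule.span F {fun i => G i j0}}

/-- A semimonomial transformation (coordinate relabeling `e`, nonzero scalars `d`, field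
automorphism `α`). -/
def monMap {n1 n2 : Type*} (e : n1 ≃ n2) (d : n2 → Fˣ) (α : F ≃+* F) (v : n1 → F) :
    n2 → F :=
  fun j => α ((d j : F) * v (e.symm j))

/-- Two linear codes are equivalent if some semimonomial transformation maps one onto
the other. -/
def CodeEquivR {n1 n2 : Type*} (C1 : Submodule F (n1 → F)) (C2 : Submodule F (n2 → F)) :
    Prop :=
  ∃ (e : n1 ≃ n2) (d : n2 → Fˣ) (α : F ≃+* F),
    monMap e d α '' (C1 : Set (n1 → F)) = (C2 : Set (n2 → F))

/-- The block matrix `[[G, 0], [a, 1⋯1]]` with `r` columns in the last block. -/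
def extBlock {k m r : ℕ} (Gres : Matrix (Fin k) (Fin m) F) (a : Fin m → F) :
    Matrix (Fin k ⊕ Unit) (Fin m ⊕ Fin r) F :=
  Matrix.fromBlocks Gres 0 (Matrix.of fun _ j => a j) (Matrix.of fun _ _ => (1 : F))

/-- The weight enumerator of a code, as the sequence `i ↦ A_i` of numbers of codewords
of Hamming weight `i`. -/
noncomputable def wEnum [DecidableEq F] {n : ℕ} (C : Submodule F (Fin n → F)) : ℕ → ℕ :=
  fun i => Nat.card {c : Fin n → F // c ∈ C ∧ hammingNorm c = i}

/-- Lexicographic comparison of weight enumerators (coefficient sequences). -/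
def lexLE (f g : ℕ → ℕ) : Prop :=
  f = g ∨ ∃ i, (∀ j < i, f j = g j) ∧ f i < g i

lemma lexLE_iff_toLex_le {f g : ℕ → ℕ} : lexLE f g ↔ toLex f ≤ toLex g := by
  rw [le_iff_eq_or_lt]
  rfl

lemma hammingNorm_sumElim_zero {m r : Type*} [Fintype m] [Fintype r] [DecidableEq F]
    (c : m → F) : hammingNorm (Sum.elim c (0 : r → F)) = hammingNorm c := by
  simp only [hammingNorm, Finset.card_filter, Fintype.sum_sum_type, Sum.elim_inl, Sum.elim_inr,
    Pi.zero_apply, ne_eq, not_true_eq_false, if_false, Finset.sum_const_zero, add_zero]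
  rfl

lemma hammingNorm_monMap {n1 n2 : Type*} [Fintype n1] [Fintype n2] [DecidableEq F]
    (e : n1 ≃ n2) (d : n2 → Fˣ) (α : F ≃+* F) (v : n1 → F) :
    hammingNorm (monMap e d α v) = hammingNorm v := by
  simp only [hammingNorm, monMap, Finset.card_filter, ne_eq, map_eq_zero, mul_eq_zero,
    Units.ne_zero, false_or]
  exact e.symm.sum_comp (fun i => if ¬ v i = 0 then 1 else 0)

lemma rowSpan_mul_le {m k n : Type*} [Fintype k] (A : Matrix m k F) (G : Matrix k n F) :
    rowSpan (A * G) ≤ rowSpan G := by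
  rw [rowSpan, Submodule.span_le, Set.range_subset_iff]
  intro i
  refine (Submodule.mem_span_range_iff_exists_fun F).2 ⟨A i, ?_⟩
  ext j
  simp [Matrix.mul_apply, Finset.sum_apply]

lemma rowSpan_mul_of_mul_eq_one {m k n : Type*} [Fintype m] [Fintype k] [DecidableEq k]
    {A : Matrix m k F} {B : Matrix k m F} (hBA : B * A = 1) (G : Matrix k n F) :
    rowSpan (A * G) = rowSpan G := by
  refine (rowSpan_mul_le A G).antisymm ?_
  simpa [← Matrix.mul_assoc, hBA] using rowSpan_mul_le B (A * G)

lemma forall_mem_rowSpan_apply_eq_zero_iff {ι n : Type*} (G : Matrix ι n F) (j : n) :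
    (∀ c ∈ rowSpan G, c j = 0) ↔ Gᵀ j = 0 := by
  change rowSpan G ≤ LinearMap.ker (LinearMap.proj j) ↔ _
  rw [rowSpan, Submodule.span_le, Set.range_subset_iff, funext_iff]
  rfl

lemma exists_mem_rowSpan_apply_ne_zero_iff {ι n : Type*} (G : Matrix ι n F) (j : n) :
    (∃ c ∈ rowSpan G, c j ≠ 0) ↔ Gᵀ j ≠ 0 := by
  simpa using (forall_mem_rowSpan_apply_eq_zero_iff G j).not

lemma map_rowSpan {ι n1 n2 : Type*} (f : (n1 → F) →ₗ[F] (n2 → F)) (G : Matrix ι n1 F) :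
    (rowSpan G).map f = rowSpan (Matrix.of fun i => f (G i)) := by
  rw [rowSpan, rowSpan, Submodule.map_span, ← Set.range_comp]
  rfl

def monLinearEquiv {n1 n2 : Type*} (e : n1 ≃ n2) (d : n2 → Fˣ) : (n1 → F) ≃ₗ[F] (n2 → F) :=
  (LinearEquiv.funCongrLeft F F e.symm).trans
    (LinearEquiv.piCongrRight fun j => LinearEquiv.smulOfUnit (d j))

lemma coe_monLinearEquiv {n1 n2 : Type*} (e : n1 ≃ n2) (d : n2 → Fˣ) :
    ⇑(monLinearEquiv e d) = monMap (F := F) e d (RingEquiv.refl F) := by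
  rfl

lemma codeEquivR_map_monLinearEquiv {n1 n2 : Type*} (C : Submodule F (n1 → F)) (e : n1 ≃ n2)
    (d : n2 → Fˣ) : CodeEquivR C (C.map (monLinearEquiv e d).toLinearMap) :=
  ⟨e, d, RingEquiv.refl F, by rw [Submodule.map_coe, LinearEquiv.coe_coe, coe_monLinearEquiv]⟩

lemma CodeEquivR.hammingNorm_mem {n1 n2 : Type*} [Fintype n1] [Fintype n2] [DecidableEq F]
    {C1 : Submodule F (n1 → F)} {C2 : Submodule F (n2 → F)} (h : CodeEquivR C1 C2) {W : Set ℕ}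
    (hW : ∀ c ∈ C1, c ≠ 0 → hammingNorm c ∈ W) : ∀ c ∈ C2, c ≠ 0 → hammingNorm c ∈ W := by
  obtain ⟨e, d, α, himg⟩ := h
  intro c hc hc0
  rw [← SetLike.mem_coe, ← himg] at hc
  obtain ⟨c, hc, rfl⟩ := hc
  rw [hammingNorm_monMap]
  refine hW c hc ?_
  rintro rfl
  exact hc0 (by ext; simp [monMap])

lemma exists_linearEquiv_apply_eq_single {k : ℕ} {V : Type*} [AddCommGroup V] [Module F V]
    [FiniteDimensional F V] (hV : Module.finrank F V = k + 1) {g : V} (hg : g ≠ 0) :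
    ∃ f : V ≃ₗ[F] (Fin k ⊕ Unit → F), f g = Pi.single (Sum.inr ()) 1 := by
  obtain ⟨q, hq⟩ := Submodule.exists_isCompl (F ∙ g)
  have hqk : Module.finrank F q = k := by
    have := Submodule.finrank_add_eq_of_isCompl hq
    rw [finrank_span_singleton hg, hV] at this
    omega
  let bq := Module.finBasisOfFinrankEq F q hqk
  have hv : LinearIndependent F (Sum.elim (fun i => (bq i : V)) fun _ : Unit => g) := by
    refine (bq.linearIndependent.map' q.subtype q.ker_subtype).sum_type
      (linearIndependent_unique_iff.2 hg) ?_
    rw [Set.range_comp, Submodule.span_image, bq.span_eq, Submodule.map_subtype_top,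
      Set.range_const]
    exact hq.disjoint.symm
  let b := basisOfLinearIndependentOfCardEqFinrank hv (by simp [hV])
  refine ⟨b.equivFun, ?_⟩
  have hb : b (Sum.inr ()) = g := by simp [b]
  rw [← hb, b.equivFun_apply, b.repr_self, Finsupp.single_eq_pi_single]

lemma exists_rowSpan_extBlock_eq {k m r : ℕ} (G : Matrix (Fin (k + 1)) (Fin m ⊕ Fin r) F)
    {g : Fin (k + 1) → F} (hg : g ≠ 0) (hcol : ∀ t, Gᵀ (Sum.inr t) = g) :
    ∃ (Gres : Matrix (Fin k) (Fin m) F) (a : Fin m → F),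
      rowSpan (extBlock (r := r) Gres a) = rowSpan G ∧
        ∀ s, Gresᵀ s = 0 → Gᵀ (Sum.inl s) = a s • g := by
  obtain ⟨f, hf⟩ := exists_linearEquiv_apply_eq_single (Module.finrank_fin_fun F) hg
  let A := LinearMap.toMatrix' f.toLinearMap
  have hBA : LinearMap.toMatrix' f.symm.toLinearMap * A = 1 := by
    rw [← LinearMap.toMatrix'_comp]
    simp
  have hcolA : ∀ j, (A * G)ᵀ j = f (Gᵀ j) := fun j =>
    LinearMap.toMatrix'_mulVec f.toLinearMap (Gᵀ j)
  refine ⟨Matrix.of fun i s => (A * G) (.inl i) (.inl s),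
    fun s => (A * G) (.inr ()) (.inl s), ?_, fun s hs => f.injective ?_⟩
  · have hblock : extBlock (r := r) (Matrix.of fun i s => (A * G) (.inl i) (.inl s))
        (fun s => (A * G) (.inr ()) (.inl s)) = A * G := by
      ext (i | i) (s | t)
      · rfl
      · change (0 : F) = (A * G)ᵀ (.inr t) (.inl i)
        rw [hcolA, hcol, hf]
        simp
      · rfl
      · change (1 : F) = (A * G)ᵀ (.inr t) (.inr i)
        rw [hcolA, hcol, hf]
        simp
    rw [hblock, rowSpan_mul_of_mul_eq_one hBA]
  · rw [← hcolA, map_smul, hf]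
    ext (i | i)
    · simpa using congrFun hs i
    · simp

lemma sumElim_zero_mem_rowSpan_extBlock {k m r : ℕ} {Gres : Matrix (Fin k) (Fin m) F}
    (a : Fin m → F) {c : Fin m → F} (hc : c ∈ rowSpan Gres) :
    Sum.elim c (0 : Fin r → F) ∈ rowSpan (extBlock (r := r) Gres a) := by
  obtain ⟨x, rfl⟩ := (Submodule.mem_span_range_iff_exists_fun F).1 hc
  refine (Submodule.mem_span_range_iff_exists_fun F).2 ⟨Sum.elim x 0, ?_⟩
  ext (s | t) <;> simp [extBlock, Fintype.sum_sum_type, Finset.sum_apply]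

lemma finrank_rowSpan_of_extBlock {k m r : ℕ} {Gres : Matrix (Fin k) (Fin m) F}
    {a : Fin m → F} (h : Module.finrank F (rowSpan (extBlock (r := r) Gres a)) = k + 1) :
    Module.finrank F (rowSpan Gres) = k := by
  have hli : LinearIndependent F (extBlock (r := r) Gres a) :=
    linearIndependent_iff_card_eq_finrank_span.2 (by
      simp only [Fintype.card_sum, Fintype.card_fin, Fintype.card_unit]
      exact h.symm)
  let ext : (Fin m → F) →ₗ[F] (Fin m ⊕ Fin r → F) :=
    (LinearEquiv.sumArrowLequivProdArrow _ _ F F).symm.toLinearMap ∘ₗ LinearMap.inl F _ _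
  have hGres : LinearIndependent F Gres :=
    LinearIndependent.of_comp ext (hli.comp Sum.inl Sum.inl_injective)
  rw [rowSpan, finrank_span_eq_card hGres, Fintype.card_fin]

lemma exists_equiv_sum_fin {α : Type*} [Fintype α] (p : α → Prop) [DecidablePred p] {n r : ℕ}
    (hn : Fintype.card α = n) (hr : Nat.card {a // p a} = r) :
    ∃ σ : α ≃ Fin (n - r) ⊕ Fin r, (∀ s, ¬ p (σ.symm (.inl s))) ∧ ∀ t, p (σ.symm (.inr t)) := by
  rw [Nat.card_eq_fintype_card] at hr
  have hc : Fintype.card {a // ¬ p a} = n - r := by rw [Fintype.card_subtype_compl, hn, hr]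
  refine ⟨(Equiv.sumCompl p).symm.trans ((Equiv.sumComm _ _).trans
    ((Fintype.equivFinOfCardEq hc).sumCongr (Fintype.equivFinOfCardEq hr))), ?_, ?_⟩
  · intro s
    simpa using ((Fintype.equivFinOfCardEq hc).symm s).2
  · intro t
    simpa using ((Fintype.equivFinOfCardEq hr).symm t).2

lemma exists_residual_code [DecidableEq F] {n' k' r : ℕ} (W : Set ℕ)
    (C' : Submodule F (Fin n' → F)) (hdim : Module.finrank F C' = k')
    (heff : ∀ j, ∃ c ∈ C', c j ≠ 0) (hw : ∀ c ∈ C', c ≠ 0 → hammingNorm c ∈ W)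
    (G' : Matrix (Fin k') (Fin n') F) (hG' : rowSpan G' = C') {j0 : Fin n'}
    (hj0 : colMult G' j0 = r) :
    ∃ (Gres : Matrix (Fin (k' - 1)) (Fin (n' - r)) F) (a : Fin (n' - r) → F),
      Module.finrank F (rowSpan Gres) = k' - 1 ∧
      (∀ j, ∃ c ∈ rowSpan Gres, c j ≠ 0) ∧
      (∀ c ∈ rowSpan Gres, c ≠ 0 → hammingNorm c ∈ W) ∧
      CodeEquivR C' (rowSpan (extBlock (r := r) Gres a)) := by
  classical
  subst hG'
  have hcol : ∀ j, G'ᵀ j ≠ 0 := fun j => (exists_mem_rowSpan_apply_ne_zero_iff G' j).1 (heff j)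
  set g := G'ᵀ j0
  obtain ⟨k, rfl⟩ : ∃ k, k' = k + 1 := Nat.exists_eq_add_one.2 <| Nat.pos_of_ne_zero fun hk => by
    subst hk
    exact hcol j0 (Subsingleton.elim _ _)
  rw [Nat.add_sub_cancel]
  obtain ⟨σ, hσl, hσr⟩ := exists_equiv_sum_fin
    (fun j => Submodule.span F {G'ᵀ j} = Submodule.span F {g}) (Fintype.card_fin n') hj0
  choose u hu using fun t => Submodule.span_singleton_eq_span_singleton.1 (hσr t)
  let d : Fin (n' - r) ⊕ Fin r → Fˣ := Sum.elim 1 u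
  let L := monLinearEquiv σ d
  let G'' : Matrix (Fin (k + 1)) (Fin (n' - r) ⊕ Fin r) F := Matrix.of fun i => L (G' i)
  have hmap : (rowSpan G').map L.toLinearMap = rowSpan G'' := map_rowSpan _ _
  have hcolL : ∀ j, G''ᵀ j = d j • G'ᵀ (σ.symm j) := fun j => by
    ext i
    simp [G'', L, coe_monLinearEquiv, monMap, Units.smul_def]
  obtain ⟨Gres, a, hspan, hzero⟩ := exists_rowSpan_extBlock_eq G'' (hcol j0) fun t =>
    (hcolL _).trans (hu t)
  have hequiv : CodeEquivR (rowSpan G') (rowSpan (extBlock (r := r) Gres a)) := by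
    rw [hspan, ← hmap]
    exact codeEquivR_map_monLinearEquiv _ _ _
  have hfin : Module.finrank F (rowSpan (extBlock (r := r) Gres a)) = k + 1 := by
    rw [hspan, ← hmap, LinearEquiv.finrank_map_eq, hdim]
  refine ⟨Gres, a, finrank_rowSpan_of_extBlock hfin, fun s => ?_, fun c hc hc0 => ?_, hequiv⟩
  · rw [exists_mem_rowSpan_apply_ne_zero_iff]
    intro hs
    have hcol_s : G'ᵀ (σ.symm (.inl s)) = a s • g := by
      rw [← one_smul Fˣ (G'ᵀ _), ← hzero s hs, hcolL]
      rfl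
    by_cases ha : a s = 0
    · exact hcol _ (by rw [hcol_s, ha, zero_smul])
    · exact hσl s (by rw [hcol_s]; exact Submodule.span_singleton_smul_eq (IsUnit.mk0 _ ha) g)
  · have hne : Sum.elim c (0 : Fin r → F) ≠ 0 := fun h => hc0 (funext fun s => congrFun h (.inl s))
    simpa [hammingNorm_sumElim_zero] using
      hequiv.hammingNorm_mem hw _ (sumElim_zero_mem_rowSpan_extBlock a hc) hne

theorem stmt11_general [Fintype F] [DecidableEq F] {n' k' r : ℕ} (W : Set ℕ)
    (C' : Submodule F (Fin n' → F)) (hdim : Module.finrank F C' = k')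
    (heff : ∀ j, ∃ c ∈ C', c j ≠ 0)
    (hw : ∀ c ∈ C', c ≠ 0 → hammingNorm c ∈ W)
    (G' : Matrix (Fin k') (Fin n') F) (hG' : rowSpan G' = C')
    (hrex : ∃ j, colMult G' j = r) :
    ∃ (C : Submodule F (Fin (n' - r) → F))
      (Gres : Matrix (Fin (k' - 1)) (Fin (n' - r)) F) (aa : Fin (n' - r) → F),
      rowSpan Gres = C ∧
      Module.finrank F C = k' - 1 ∧
      (∀ j, ∃ c ∈ C, c j ≠ 0) ∧
      (∀ c ∈ C, c ≠ 0 → hammingNorm c ∈ W) ∧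
      CodeEquivR C' (rowSpan (extBlock (r := r) Gres aa)) ∧
      (∀ (C2 : Submodule F (Fin (n' - r) → F))
          (Gres2 : Matrix (Fin (k' - 1)) (Fin (n' - r)) F) (aa2 : Fin (n' - r) → F),
        rowSpan Gres2 = C2 →
        Module.finrank F C2 = k' - 1 →
        (∀ j, ∃ c ∈ C2, c j ≠ 0) →
        (∀ c ∈ C2, c ≠ 0 → hammingNorm c ∈ W) →
        CodeEquivR C' (rowSpan (extBlock (r := r) Gres2 aa2)) →
        lexLE (wEnum C) (wEnum C2)) := by
  obtain ⟨j0, hj0⟩ := hrex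
  obtain ⟨Gres, aa, hres⟩ := exists_residual_code W C' hdim heff hw G' hG' hj0
  let residuals : Set (Submodule F (Fin (n' - r) → F)) :=
    {C | ∃ (Gres : Matrix (Fin (k' - 1)) (Fin (n' - r)) F) (aa : Fin (n' - r) → F),
      rowSpan Gres = C ∧ Module.finrank F C = k' - 1 ∧ (∀ j, ∃ c ∈ C, c j ≠ 0) ∧
      (∀ c ∈ C, c ≠ 0 → hammingNorm c ∈ W) ∧
      CodeEquivR C' (rowSpan (extBlock (r := r) Gres aa))}
  obtain ⟨C, ⟨Gres, aa, h1, h2, h3, h4, h5⟩, hmin⟩ :=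
    residuals.exists_min_image (toLex ∘ wEnum) residuals.toFinite ⟨_, Gres, aa, rfl, hres⟩
  exact ⟨C, Gres, aa, h1, h2, h3, h4, h5, fun C2 Gres2 aa2 g1 g2 g3 g4 g5 =>
    lexLE_iff_toLex_le.2 (hmin C2 ⟨Gres2, aa2, g1, g2, g3, g4, g5⟩)⟩

/-- Corollary 9.  Let `C'` be an `[n',k',W]_q` code with minimum column multiplicity `r`.
Then among all `[n'-r, k'-1, W]_q` codes `C` such that `C'` is equivalent to the code
generated by `[[Ĝ, 0], [a, 1⋯1]]` (these are exactly the residual codes `C_P` at the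
points `P` of column multiplicity `r`), there is one whose weight enumerator is
lexicographically minimal. -/
theorem stmt11 [Fintype F] [DecidableEq F] {n' k' r : ℕ} (W : Set ℕ)
    (hW : ∀ w ∈ W, 1 ≤ w)
    (C' : Submodule F (Fin n' → F)) (hdim : Module.finrank F C' = k')
    (heff : ∀ j, ∃ c ∈ C', c j ≠ 0)
    (hw : ∀ c ∈ C', c ≠ 0 → hammingNorm c ∈ W)
    (G' : Matrix (Fin k') (Fin n') F) (hG' : rowSpan G' = C')
    (hrlb : ∀ j, r ≤ colMult G' j) (hrex : ∃ j, colMult G' j = r) :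
    ∃ (C : Submodule F (Fin (n' - r) → F))
      (Gres : Matrix (Fin (k' - 1)) (Fin (n' - r)) F) (aa : Fin (n' - r) → F),
      rowSpan Gres = C ∧
      Module.finrank F C = k' - 1 ∧
      (∀ j, ∃ c ∈ C, c j ≠ 0) ∧
      (∀ c ∈ C, c ≠ 0 → hammingNorm c ∈ W) ∧
      CodeEquivR C' (rowSpan (extBlock (r := r) Gres aa)) ∧
      (∀ (C2 : Submodule F (Fin (n' - r) → F))
          (Gres2 : Matrix (Fin (k' - 1)) (Fin (n' - r)) F) (aa2 : Fin (n' - r) → F),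
        rowSpan Gres2 = C2 →
        Module.finrank F C2 = k' - 1 →
        (∀ j, ∃ c ∈ C2, c j ≠ 0) →
        (∀ c ∈ C2, c ≠ 0 → hammingNorm c ∈ W) →
        CodeEquivR C' (rowSpan (extBlock (r := r) Gres2 aa2)) →
        lexLE (wEnum C) (wEnum C2)) :=
  stmt11_general W C' hdim heff hw G' hG' hrex
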